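/- arXiv:0912.0917 — 2 statements merged into one kernel-verified Lean document; each statement's English description precedes it below -/
import Mathlib

section
/- For every natural number m ≥ 1 and every real θ with |θ| < π, the Abel limit lim_{r→1⁻} ∑_{n=1}^∞ (-1)^{n-1} n^{2m-1} sin(nθ) r^n = 0. -/
/-!
For `|w| < 1`, `F_j(w) = ∑ (-1)^k (k+1)^j w^(k+1)` is `(w d/dw)^j` applied to `w / (1 + w)`,
a rational function whose only pole is `-1`. Since `w / (1 + w) + w⁻¹ / (1 + w⁻¹) = 1` and
`w d/dw` anticommutes with `w ↦ w⁻¹`, we get `F_j(w⁻¹) = (-1)^(j+1) F_j(w)` for `j ≥ 1`.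
Writing `sin nθ = (e^{inθ} - e^{-inθ}) / 2i`, the series equals
`(F_j(r e^{iθ}) - F_j(r e^{-iθ})) / 2i`, which tends to `(F_j(e^{iθ}) - F_j(e^{-iθ})) / 2i` as
`r → 1⁻` because `e^{±iθ} ≠ -1`; for odd `j` this is `0`.
-/

open Complex Filter Topology Metric

noncomputable section

def eulerOp (g : ℂ → ℂ) (z : ℂ) : ℂ := z * deriv g z

theorem DifferentiableOn.eulerOp {g : ℂ → ℂ} {U : Set ℂ} (hg : DifferentiableOn ℂ g U)
    (hU : IsOpen U) : DifferentiableOn ℂ (eulerOp g) U :=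
  differentiableOn_id.mul (hg.deriv hU)

theorem eulerOp_inv {g : ℂ → ℂ} {z c s : ℂ} (hz : z ≠ 0) (hg : DifferentiableAt ℂ g z⁻¹)
    (hsymm : (fun w => g w⁻¹) =ᶠ[𝓝 z] fun w => c + s * g w) :
    eulerOp g z⁻¹ = -s * eulerOp g z := by
  have hchain : deriv (fun w => g w⁻¹) z = deriv g z⁻¹ * -(z ^ 2)⁻¹ :=
    (hg.hasDerivAt.comp z (hasDerivAt_inv hz)).deriv
  have hderiv_symm : deriv (fun w => g w⁻¹) z = s * deriv g z := by
    rw [hsymm.deriv_eq, deriv_const_add', deriv_const_mul_field']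
  unfold eulerOp
  rw [hchain] at hderiv_symm
  set d := deriv g z⁻¹
  field_simp at hderiv_symm ⊢
  linear_combination -hderiv_symm

theorem Complex.norm_natCast_add_one (k : ℕ) : ‖(k : ℂ) + 1‖ = k + 1 := by
  exact_mod_cast Complex.norm_natCast (k + 1)

theorem summable_add_one_pow_mul_geometric (p : ℕ) {ρ : ℝ} (h₀ : 0 < ρ) (h₁ : ρ < 1) :
    Summable fun k : ℕ => ((k : ℝ) + 1) ^ p * ρ ^ k := by
  have hshift := (summable_nat_add_iff 1).2
    (summable_pow_mul_geometric_of_norm_lt_one p (r := ρ) (by rwa [Real.norm_of_nonneg h₀.le]))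
  refine (hshift.mul_left ρ⁻¹).congr fun k => ?_
  push_cast
  field_simp
  ring

theorem hasSum_eulerOp {b : ℕ → ℂ} {g : ℂ → ℂ} {R : ℝ}
    (hg : ∀ w ∈ ball (0 : ℂ) R, HasSum (fun k => b k * w ^ (k + 1)) (g w))
    (hb : ∀ ρ ∈ Set.Ioo 0 R, Summable fun k => ‖b k‖ * ((k : ℝ) + 1) * ρ ^ k)
    {z : ℂ} (hz : z ∈ ball (0 : ℂ) R) :
    HasSum (fun k : ℕ => ((k : ℂ) + 1) * b k * z ^ (k + 1)) (eulerOp g z) := by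
  rw [mem_ball_zero_iff] at hz
  obtain ⟨ρ, hzρ, hρR⟩ := exists_between hz
  have hzρ' : z ∈ ball (0 : ℂ) ρ := mem_ball_zero_iff.2 hzρ
  have hterm : ∀ k w, HasDerivAt (fun w => b k * w ^ (k + 1)) (b k * (((k : ℂ) + 1) * w ^ k)) w :=
    fun k w => by simpa using (hasDerivAt_pow (k + 1) w).const_mul (b k)
  have hbound : ∀ k, ∀ w ∈ ball (0 : ℂ) ρ,
      ‖b k * (((k : ℂ) + 1) * w ^ k)‖ ≤ ‖b k‖ * ((k : ℝ) + 1) * ρ ^ k := by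
    intro k w hw
    rw [mem_ball_zero_iff] at hw
    rw [norm_mul, norm_mul, norm_pow, Complex.norm_natCast_add_one, mul_assoc]
    gcongr
  have hsumρ := hb ρ ⟨(norm_nonneg z).trans_lt hzρ, hρR⟩
  have hderiv := hasDerivAt_tsum_of_isPreconnected hsumρ isOpen_ball
    (convex_ball 0 ρ).isPreconnected (fun k w _ => hterm k w) hbound hzρ'
    (hg z (mem_ball_zero_iff.2 hz)).summable hzρ'
  have hseries : (fun w => ∑' k, b k * w ^ (k + 1)) =ᶠ[𝓝 z] g := by
    filter_upwards [isOpen_ball.mem_nhds (mem_ball_zero_iff.2 hz)] with w hw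
    exact (hg w hw).tsum_eq
  have hsum : HasSum (fun k => b k * (((k : ℂ) + 1) * z ^ k)) (deriv g z) := by
    rw [(hderiv.congr_of_eventuallyEq hseries.symm).deriv]
    exact (Summable.of_norm_bounded hsumρ fun k => hbound k z hzρ').hasSum
  have hterm_eq : (fun k : ℕ => ((k : ℂ) + 1) * b k * z ^ (k + 1)) =
      fun k => z * (b k * (((k : ℂ) + 1) * z ^ k)) := funext fun k => by ring
  rw [hterm_eq]
  exact hsum.mul_left z

def altPowGenFun (j : ℕ) : ℂ → ℂ := eulerOp^[j] fun z => z / (1 + z)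

theorem altPowGenFun_succ (j : ℕ) : altPowGenFun (j + 1) = eulerOp (altPowGenFun j) :=
  Function.iterate_succ_apply' eulerOp j _

theorem differentiableOn_altPowGenFun (j : ℕ) :
    DifferentiableOn ℂ (altPowGenFun j) {-1}ᶜ := by
  induction j with
  | zero =>
    refine differentiableOn_id.div (differentiableOn_id.const_add 1) fun z hz h => hz ?_
    simpa using eq_neg_of_add_eq_zero_right h
  | succ j ih =>
    rw [altPowGenFun_succ]
    exact ih.eulerOp isOpen_compl_singleton

theorem hasSum_altPowGenFun (j : ℕ) {z : ℂ} (hz : z ∈ ball (0 : ℂ) 1) :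
    HasSum (fun k : ℕ => (-1) ^ k * ((k : ℂ) + 1) ^ j * z ^ (k + 1)) (altPowGenFun j z) := by
  induction j generalizing z with
  | zero =>
    have hgeom := (hasSum_geometric_of_norm_lt_one (ξ := -z) (by simpa using hz)).mul_left z
    have hvalue : z * (1 - -z)⁻¹ = altPowGenFun 0 z := by
      rw [sub_neg_eq_add, altPowGenFun, Function.iterate_zero_apply, div_eq_mul_inv]
    exact hvalue ▸ hgeom.congr_fun fun k => by ring
  | succ j ih =>
    rw [altPowGenFun_succ]
    refine (hasSum_eulerOp (R := 1) (fun w hw => ih hw) (fun ρ hρ => ?_) hz).congr_fun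
      fun k => by ring
    refine (summable_add_one_pow_mul_geometric (j + 1) hρ.1 hρ.2).congr fun k => ?_
    simp only [norm_mul, norm_pow, norm_neg, norm_one, one_pow, Complex.norm_natCast_add_one]
    ring

theorem inv_ne_neg_one {α : Type*} [DivisionMonoid α] [HasDistribNeg α] {z : α} (hz : z ≠ -1) :
    z⁻¹ ≠ -1 := by
  rwa [Ne, inv_eq_iff_eq_inv, inv_neg, inv_one]

theorem altPowGenFun_inv (j : ℕ) {z : ℂ} (hz₀ : z ≠ 0) (hz₁ : z ≠ -1) :
    altPowGenFun (j + 1) z⁻¹ = (-1) ^ j * altPowGenFun (j + 1) z := by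
  have hU : IsOpen ({0}ᶜ ∩ {-1}ᶜ : Set ℂ) := isOpen_compl_singleton.inter isOpen_compl_singleton
  have hdiff : ∀ i {w : ℂ}, w ≠ -1 → DifferentiableAt ℂ (altPowGenFun i) w⁻¹ := fun i _ hw =>
    (differentiableOn_altPowGenFun i).differentiableAt
      (isOpen_compl_singleton.mem_nhds (inv_ne_neg_one hw))
  induction j generalizing z with
  | zero =>
    have hsymm : (fun w => altPowGenFun 0 w⁻¹) =ᶠ[𝓝 z] fun w => 1 + -1 * altPowGenFun 0 w := by
      filter_upwards [hU.mem_nhds ⟨hz₀, hz₁⟩] with w hw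
      obtain ⟨hw₀, hw₁⟩ : w ≠ 0 ∧ w ≠ -1 := hw
      have h₁ : w + 1 ≠ 0 := fun h => hw₁ (eq_neg_of_add_eq_zero_left h)
      have h₂ : 1 + w ≠ 0 := by rwa [add_comm]
      simp only [altPowGenFun, Function.iterate_zero_apply]
      field_simp
      ring
    rw [altPowGenFun_succ, eulerOp_inv hz₀ (hdiff 0 hz₁) hsymm]
    ring
  | succ j ih =>
    have hsymm : (fun w => altPowGenFun (j + 1) w⁻¹) =ᶠ[𝓝 z]
        fun w => 0 + (-1) ^ j * altPowGenFun (j + 1) w := by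
      filter_upwards [hU.mem_nhds ⟨hz₀, hz₁⟩] with w hw
      obtain ⟨hw₀, hw₁⟩ : w ≠ 0 ∧ w ≠ -1 := hw
      rw [zero_add, ih hw₀ hw₁]
    rw [altPowGenFun_succ, eulerOp_inv hz₀ (hdiff (j + 1) hz₁) hsymm]
    ring

theorem tendsto_sin_series_of_hasSum {a : ℕ → ℝ} {F : ℂ → ℂ} {θ : ℝ}
    (hF : ∀ w ∈ ball (0 : ℂ) 1, HasSum (fun k => (a k : ℂ) * w ^ (k + 1)) (F w))
    (hFθ : ContinuousAt F (exp (θ * I))) (hFnegθ : ContinuousAt F (exp (-θ * I)))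
    (hsymm : F (exp (-θ * I)) = F (exp (θ * I))) :
    Tendsto (fun r : ℝ => ∑' k : ℕ, a k * Real.sin ((k + 1) * θ) * r ^ (k + 1)) (𝓝[<] 1)
      (𝓝 0) := by
  have hball : ∀ {r : ℝ} {z : ℂ}, r ∈ Set.Ioo (-1) 1 → ‖z‖ = 1 → (r : ℂ) * z ∈ ball (0 : ℂ) 1 := by
    intro r z hr hz
    rw [mem_ball_zero_iff, norm_mul, hz, mul_one, norm_real, Real.norm_eq_abs]
    exact abs_lt.2 hr
  have hnormθ : ‖exp (θ * I)‖ = 1 := norm_exp_ofReal_mul_I θ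
  have hnormNegθ : ‖exp (-θ * I)‖ = 1 := by simpa using norm_exp_ofReal_mul_I (-θ)
  have hterm : ∀ (r : ℝ) (k : ℕ), ((a k * Real.sin ((k + 1) * θ) * r ^ (k + 1) : ℝ) : ℂ) =
      ((a k : ℂ) * (r * exp (θ * I)) ^ (k + 1) - (a k : ℂ) * (r * exp (-θ * I)) ^ (k + 1))
        / (2 * I) := by
    intro r k
    rw [mul_pow, mul_pow, ← exp_nat_mul, ← exp_nat_mul]
    push_cast
    rw [Complex.sin]
    field_simp
    ring_nf
    rw [I_sq]
    ring
  have hseries : ∀ r ∈ Set.Ioo (-1 : ℝ) 1, (F (r * exp (θ * I)) - F (r * exp (-θ * I))) / (2 * I)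
      = ((∑' k : ℕ, a k * Real.sin ((k + 1) * θ) * r ^ (k + 1) : ℝ) : ℂ) := by
    intro r hr
    rw [ofReal_tsum]
    refine (((hF _ (hball hr hnormθ)).sub (hF _ (hball hr hnormNegθ))).div_const (2 * I)).congr_fun
      (hterm r) |>.tsum_eq.symm
  have hcomp : ∀ z, ContinuousAt F z → Tendsto (fun r : ℝ => F (r * z)) (𝓝 1) (𝓝 (F z)) :=
    fun z hz => hz.tendsto.comp
      ((by fun_prop : Continuous fun r : ℝ => (r : ℂ) * z).tendsto' 1 z (by simp))
  have hlim : Tendsto (fun r : ℝ => (F (r * exp (θ * I)) - F (r * exp (-θ * I))) / (2 * I))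
      (𝓝 1) (𝓝 0) := by
    have := ((hcomp _ hFθ).sub (hcomp _ hFnegθ)).div_const (2 * I)
    rwa [hsymm, sub_self, zero_div] at this
  rw [← tendsto_ofReal_iff, ofReal_zero]
  exact (hlim.mono_left nhdsWithin_le_nhds).congr'
    (eventually_of_mem (Ioo_mem_nhdsLT (by norm_num)) hseries)

theorem exp_ofReal_mul_I_ne_neg_one {θ : ℝ} (hθ : |θ| < Real.pi) : exp (θ * I) ≠ -1 := by
  intro h
  have hcos : Real.cos θ = -1 := by simpa [exp_ofReal_mul_I_re] using congrArg re h
  have hshift : Real.cos (θ - Real.pi) = 1 := by rw [Real.cos_sub_pi, hcos, neg_neg]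
  obtain ⟨hθ₁, hθ₂⟩ := abs_lt.1 hθ
  have := (Real.cos_eq_one_iff_of_lt_of_lt (by linarith) (by linarith)).1 hshift
  linarith

end

/-- Abel summation: `lim_{r→1⁻} ∑_{n=1}^∞ (-1)^{n-1} n^{2m-1} sin(nθ) r^n = 0`
for `|θ| < π`. The sum over `n ≥ 1` is indexed by `n = k + 1`. -/
theorem abel_sum_sin (m : ℕ) (hm : 1 ≤ m) (θ : ℝ) (hθ : |θ| < Real.pi) :
    Filter.Tendsto
      (fun r : ℝ => ∑' k : ℕ,
        (-1) ^ k * ((k : ℝ) + 1) ^ (2 * m - 1) * Real.sin (((k : ℝ) + 1) * θ) * r ^ (k + 1))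
      (nhdsWithin 1 (Set.Iio 1)) (nhds 0) := by
  have hodd : 2 * m - 1 = 2 * (m - 1) + 1 := by omega
  have hz : exp (θ * I) ≠ -1 := exp_ofReal_mul_I_ne_neg_one hθ
  have hinv : exp (-θ * I) = (exp (θ * I))⁻¹ := by rw [neg_mul, exp_neg]
  have hcont : ∀ {z : ℂ}, z ≠ -1 → ContinuousAt (altPowGenFun (2 * (m - 1) + 1)) z := fun hz =>
    (differentiableOn_altPowGenFun _).continuousOn.continuousAt
      (isOpen_compl_singleton.mem_nhds hz)
  rw [hodd]
  refine tendsto_sin_series_of_hasSum (F := altPowGenFun (2 * (m - 1) + 1))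
    (fun w hw => (hasSum_altPowGenFun _ hw).congr_fun fun k => by push_cast; ring)
    (hcont hz) (hcont (hinv ▸ inv_ne_neg_one hz)) ?_
  rw [hinv, altPowGenFun_inv _ (exp_ne_zero _) hz, (even_two_mul _).neg_one_pow, one_mul]
end

section
/- For every natural number m ≥ 1, lim_{r→1⁻} ∑_{n=1}^∞ (-1)^{n-1} (2n-1)^{2m-1} r^n = 0. -/
/-!
The Abel sum `L(q) = lim_{r → 1⁻} ∑ (-1)^k q(k) r^k` of a polynomial `q` is determined by the
telescoping relation `L(q) + L(q(· + 1)) = q(0)`: induction on the degree of `q` proves both that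
the limit exists and that it is unchanged by the reflection `q ↦ q(-1 - ·)`, which is compatible
with that relation. For odd `n` the reflection sends `(2x + 1)^n` to its negative, so the Abel
sum of `1^n - 3^n + 5^n - ⋯` vanishes.
-/

open Filter Topology Polynomial

theorem degree_taylor_sub_lt {R : Type*} [Ring R] (r : R) {q : R[X]} (hq : q ≠ 0) :
    (taylor r q - q).degree < q.degree := by
  simpa only [degree_taylor] using
    degree_sub_lt_left (degree_taylor q r) ((taylor_eq_zero r q).not.mpr hq)
      (leadingCoeff_taylor r q)

theorem comp_neg_X_sub_one_eq_taylor_one {R : Type*} [CommRing R] (q : R[X]) :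
    q.comp (-X - 1) = taylor 1 ((taylor 1 q).comp (-X - 1)) := by
  simp only [taylor_apply, comp_assoc, add_comp, neg_comp, sub_comp, X_comp, one_comp, map_one]
  ring_nf

noncomputable def abelSeries (q : ℝ[X]) (r : ℝ) : ℝ :=
  ∑' k : ℕ, (-1) ^ k * q.eval (k : ℝ) * r ^ k

namespace abelSeries

theorem summable (q : ℝ[X]) {r : ℝ} (hr : |r| < 1) :
    Summable fun k : ℕ => (-1) ^ k * q.eval (k : ℝ) * r ^ k := by
  have hr' : ‖-r‖ < 1 := by rwa [norm_neg, Real.norm_eq_abs]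
  have hterm : ∀ k : ℕ, (-1) ^ k * q.eval (k : ℝ) * r ^ k
      = ∑ i ∈ Finset.range (q.natDegree + 1), q.coeff i * ((k : ℝ) ^ i * (-r) ^ k) := by
    intro k
    rw [eval_eq_sum_range, Finset.mul_sum, Finset.sum_mul]
    refine Finset.sum_congr rfl fun i _ => ?_
    rw [neg_pow]
    ring
  simp_rw [hterm]
  exact summable_sum fun i _ => (summable_pow_mul_geometric_of_norm_lt_one i hr').mul_left _

theorem add (p q : ℝ[X]) {r : ℝ} (hr : |r| < 1) :
    abelSeries (p + q) r = abelSeries p r + abelSeries q r := by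
  rw [abelSeries, abelSeries, abelSeries, ← (summable p hr).tsum_add (summable q hr)]
  congr 1
  ext k
  rw [eval_add]
  ring

theorem neg (q : ℝ[X]) (r : ℝ) : abelSeries (-q) r = -abelSeries q r := by
  rw [abelSeries, abelSeries, ← tsum_neg]
  congr 1
  ext k
  rw [eval_neg]
  ring

@[simp]
theorem zero : abelSeries 0 = 0 := by
  ext r
  simp [abelSeries]

theorem add_mul_taylor_one (q : ℝ[X]) {r : ℝ} (hr : |r| < 1) :
    abelSeries q r + r * abelSeries (taylor 1 q) r = q.eval 0 := by
  rw [abelSeries, (summable q hr).tsum_eq_zero_add, abelSeries, ← tsum_mul_left]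
  have hshift : ∀ k : ℕ, (-1) ^ (k + 1) * q.eval ((k + 1 : ℕ) : ℝ) * r ^ (k + 1)
      = -(r * ((-1) ^ k * (taylor 1 q).eval (k : ℝ) * r ^ k)) := by
    intro k
    rw [taylor_eval]
    push_cast
    ring
  simp only [hshift, tsum_neg]
  simp

theorem one_add_mul_add_mul_taylor_one_sub (q : ℝ[X]) {r : ℝ} (hr : |r| < 1) :
    (1 + r) * abelSeries q r + r * abelSeries (taylor 1 q - q) r = q.eval 0 := by
  have h := add_mul_taylor_one q hr
  rw [← add_sub_cancel q (taylor 1 q), add q _ hr] at h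
  linarith

theorem one_add_mul_comp_add_taylor_one_sub_comp (q : ℝ[X]) {r : ℝ} (hr : |r| < 1) :
    (1 + r) * abelSeries (q.comp (-X - 1)) r
      + abelSeries ((taylor 1 q - q).comp (-X - 1)) r = q.eval 0 := by
  have h := add_mul_taylor_one ((taylor 1 q).comp (-X - 1)) hr
  rw [← comp_neg_X_sub_one_eq_taylor_one, eval_comp, taylor_eval,
    ← add_sub_cancel q (taylor 1 q), add_comp, add _ _ hr] at h
  simp only [eval_sub, eval_neg, eval_X, eval_one, neg_zero, zero_sub, neg_add_cancel] at h
  linarith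

end abelSeries

theorem eventually_abs_lt_one_nhdsLT : ∀ᶠ r : ℝ in 𝓝[<] 1, |r| < 1 := by
  filter_upwards [Ioo_mem_nhdsLT (show (-1 : ℝ) < 1 by norm_num)] with r hr
  exact abs_lt.2 hr

theorem tendsto_of_one_add_mul_add {f g : ℝ → ℝ} {c l : ℝ}
    (h : ∀ᶠ r in 𝓝[<] 1, (1 + r) * f r + g r = c) (hg : Tendsto g (𝓝[<] 1) (𝓝 l)) :
    Tendsto f (𝓝[<] 1) (𝓝 ((c - l) / 2)) := by
  have hlim : Tendsto (fun r => (c - g r) / (1 + r)) (𝓝[<] 1) (𝓝 ((c - l) / (1 + 1))) :=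
    (tendsto_const_nhds.sub hg).div
      (tendsto_const_nhds.add (tendsto_nhdsWithin_of_tendsto_nhds tendsto_id)) (by norm_num)
  rw [one_add_one_eq_two] at hlim
  refine hlim.congr' ?_
  filter_upwards [h, eventually_abs_lt_one_nhdsLT] with r hr habs
  have : 1 + r ≠ 0 := by linarith [neg_abs_le r]
  field_simp
  linarith

theorem exists_tendsto_abelSeries_and_comp_neg_X_sub_one (q : ℝ[X]) :
    ∃ L, Tendsto (abelSeries q) (𝓝[<] 1) (𝓝 L) ∧
      Tendsto (abelSeries (q.comp (-X - 1))) (𝓝[<] 1) (𝓝 L) := by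
  induction q using degree_lt_wf.induction with
  | _ q ih =>
  by_cases hq : q = 0
  · subst hq
    simp only [zero_comp, abelSeries.zero]
    exact ⟨0, tendsto_const_nhds, tendsto_const_nhds⟩
  obtain ⟨L, hL, hLσ⟩ := ih _ (degree_taylor_sub_lt 1 hq)
  refine ⟨(q.eval 0 - L) / 2, tendsto_of_one_add_mul_add
    (g := fun r => r * abelSeries (taylor 1 q - q) r) ?_ ?_, tendsto_of_one_add_mul_add ?_ hLσ⟩
  · filter_upwards [eventually_abs_lt_one_nhdsLT] with r hr
    exact abelSeries.one_add_mul_add_mul_taylor_one_sub q hr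
  · simpa using (tendsto_nhdsWithin_of_tendsto_nhds tendsto_id).mul hL
  · filter_upwards [eventually_abs_lt_one_nhdsLT] with r hr
    exact abelSeries.one_add_mul_comp_add_taylor_one_sub_comp q hr

theorem tendsto_abelSeries_zero_of_comp_neg_X_sub_one {q : ℝ[X]} (hq : q.comp (-X - 1) = -q) :
    Tendsto (abelSeries q) (𝓝[<] 1) (𝓝 0) := by
  obtain ⟨L, hL, hLσ⟩ := exists_tendsto_abelSeries_and_comp_neg_X_sub_one q
  have hLneg : Tendsto (abelSeries q) (𝓝[<] 1) (𝓝 (-L)) := by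
    simpa only [hq, funext (abelSeries.neg q), neg_neg] using hLσ.neg
  have : L = -L := tendsto_nhds_unique hL hLneg
  rwa [show L = 0 by linarith] at hL

/-- Abel summability of `1^{2m-1} - 3^{2m-1} + 5^{2m-1} - ⋯` to `0`.
The sum over `n ≥ 1` is indexed by `n = k + 1`, `(-1)^{n-1} = (-1)^k`,
`2n - 1 = 2k + 1`. -/
theorem abel_sum_odd_powers (m : ℕ) (hm : 1 ≤ m) :
    Filter.Tendsto
      (fun r : ℝ => ∑' k : ℕ, (-1) ^ k * (2 * (k : ℝ) + 1) ^ (2 * m - 1) * r ^ (k + 1))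
      (nhdsWithin 1 (Set.Iio 1)) (nhds 0) := by
  set q : ℝ[X] := (2 * X + 1) ^ (2 * m - 1)
  have hodd : Odd (2 * m - 1) := ⟨m - 1, by omega⟩
  have hq : q.comp (-X - 1) = -q := by
    rw [pow_comp, ← hodd.neg_pow]
    congr 1
    simp only [add_comp, mul_comp, ofNat_comp, X_comp, one_comp]
    ring
  have hseries : ∀ r : ℝ,
      ∑' k : ℕ, (-1) ^ k * (2 * (k : ℝ) + 1) ^ (2 * m - 1) * r ^ (k + 1) = r * abelSeries q r := by
    intro r
    rw [abelSeries, ← tsum_mul_left]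
    congr 1
    ext k
    simp only [q, eval_pow, eval_add, eval_mul, eval_ofNat, eval_X, eval_one]
    ring
  simp only [hseries]
  simpa using (tendsto_nhdsWithin_of_tendsto_nhds tendsto_id).mul
    (tendsto_abelSeries_zero_of_comp_neg_X_sub_one hq)
end
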